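/- arXiv:2210.06378 — 3 statements merged into one kernel-verified Lean document; each statement's English description precedes it below -/
import Mathlib

section
/- Let S be a set of n ≥ 2 generators, d ∈ (0,1), and λ ∈ (0,1) with ⌈λ·2n⌉ − 1 > 0 and (2n−1)^d ≥ 2/λ. If a language 𝓛 of reduced words over S has growth rate at least ⌈λ·2n⌉ − 1, then the probability that a random set of relators at density d and length L contains at least one element of 𝓛 tends to 1 as L → ∞. -/
/-! A single uniform relator lies in `L` with probability `p_l = |L ∩ R_l| / |R_l|`, so `N_l`
independent relators all miss `L` with probability `(1 - p_l) ^ N_l ≤ exp (-N_l p_l)`.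
Counting reduced words gives `|R_l| ≤ (2n / (2n - 1)) (2n - 1) ^ l`, while `N_l ~ b ^ l` with
`b = (2n - 1) ^ d`. For `K = ⌈2nλ⌉ - 1 ≥ 1` we have `K + 1 ≥ 2nλ` and `b ≥ 2 / λ`, hence
`b K ≥ b (K + 1) / 2 ≥ 2n`, so the expected number of relators in `L`, `N_l p_l`, grows at least
like `(2n / (2n - 1)) ^ l` and tends to infinity. -/

open Filter Topology

/-- The symmetrized alphabet `S ∪ S⁻¹` for a set `S` of `n` generators. -/
abbrev Letter (n : ℕ) := Fin n × Bool

/-- The formal inverse of a letter. -/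
def linv {n : ℕ} (a : Letter n) : Letter n := (a.1, !a.2)

/-- A word is reduced if no two consecutive letters are inverse to each other. -/
def Reduced {n : ℕ} (w : List (Letter n)) : Prop :=
  w.Chain' fun a b => b ≠ linv a

/-- The set of all reduced words of length `L` over `n` generators. -/
def RW (n L : ℕ) : Set (List (Letter n)) :=
  {w | w.length = L ∧ Reduced w}

/-- The number `⌊(2n-1)^(dL)⌋` of relators in a random set of relators at density `d`
and length `L`. -/
noncomputable def numRelators (n : ℕ) (d : ℝ) (L : ℕ) : ℕ :=
  ⌊(2 * (n : ℝ) - 1) ^ (d * (L : ℝ))⌋₊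

/-- The probability that a `⌊(2n-1)^(dL)⌋`-tuple of reduced words of length `l`,
chosen independently and uniformly at random, contains at least one element of `L`. -/
noncomputable def hitProb (n : ℕ) (d : ℝ) (L : Set (List (Letter n))) (l : ℕ) : ℝ :=
  (Nat.card {f : Fin (numRelators n d l) → ↥(RW n l) // ∃ i, (f i : List (Letter n)) ∈ L} : ℝ) /
    (Nat.card ↥(RW n l) : ℝ) ^ (numRelators n d l)

lemma card_subtype_add_card_subtype_not {α : Type*} [Finite α] (p : α → Prop) :
    Nat.card {a // p a} + Nat.card {a // ¬ p a} = Nat.card α := by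
  classical
  rw [← Nat.card_sum, Nat.card_congr (Equiv.sumCompl p)]

lemma card_exists_div_card_pow {α : Type*} [Finite α] [Nonempty α] (P : α → Prop) (N : ℕ) :
    (Nat.card {f : Fin N → α // ∃ i, P (f i)} : ℝ) / Nat.card α ^ N =
      1 - (1 - Nat.card {a // P a} / Nat.card α) ^ N := by
  have hmiss : Nat.card {f : Fin N → α // ¬ ∃ i, P (f i)} = Nat.card {a // ¬ P a} ^ N := by
    rw [Nat.card_congr ((Equiv.subtypeEquivRight fun f : Fin N → α => not_exists).trans
      (@Equiv.subtypePiEquivPi (Fin N) (fun _ => α) fun _ a => ¬ P a)), Nat.card_fun,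
      Nat.card_fin]
  have hall := card_subtype_add_card_subtype_not fun f : Fin N → α => ∃ i, P (f i)
  have hone := card_subtype_add_card_subtype_not P
  rw [hmiss, Nat.card_fun, Nat.card_fin] at hall
  have hA : (Nat.card α : ℝ) ≠ 0 := by exact_mod_cast Nat.card_pos.ne'
  have hmiss_frac :
      1 - (Nat.card {a // P a} : ℝ) / Nat.card α = Nat.card {a // ¬ P a} / Nat.card α := by
    rw [one_sub_div hA, ← hone]
    push_cast
    ring
  rw [hmiss_frac, div_pow, eq_sub_iff_add_eq, ← add_div, div_eq_one_iff_eq (pow_ne_zero _ hA)]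
  exact_mod_cast hall

lemma tendsto_one_sub_one_sub_pow {ι : Type*} {F : Filter ι} {p : ι → ℝ} {N : ι → ℕ}
    (hp1 : ∀ i, p i ≤ 1) (hNp : Tendsto (fun i => N i * p i) F atTop) :
    Tendsto (fun i => 1 - (1 - p i) ^ N i) F (𝓝 1) := by
  have hlow : ∀ i, 1 - Real.exp (-(N i * p i)) ≤ 1 - (1 - p i) ^ N i := fun i => by
    have := pow_le_pow_left₀ (by linarith [hp1 i]) (Real.one_sub_le_exp_neg (p i)) (N i)
    rw [← Real.exp_nat_mul, mul_neg] at this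
    linarith
  have hup : ∀ i, 1 - (1 - p i) ^ N i ≤ 1 := fun i => by
    have := pow_nonneg (sub_nonneg.mpr (hp1 i)) (N i)
    linarith
  have hexp : Tendsto (fun i => 1 - Real.exp (-(N i * p i))) F (𝓝 1) := by
    simpa using tendsto_const_nhds.sub
      (Real.tendsto_exp_atBot.comp (tendsto_neg_atTop_atBot.comp hNp))
  exact tendsto_of_tendsto_of_tendsto_of_le_of_le hexp tendsto_const_nhds hlow hup

lemma le_mul_ceil_sub_one {x lam b : ℝ} (hlam : 0 < lam) (hb : 2 / lam ≤ b)
    (hceil : 0 < ⌈lam * x⌉₊ - 1) : x ≤ b * ((⌈lam * x⌉₊ - 1 : ℕ) : ℝ) := by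
  have hm : (2 : ℝ) ≤ ⌈lam * x⌉₊ := by exact_mod_cast (by omega : 2 ≤ ⌈lam * x⌉₊)
  rw [Nat.cast_sub (by omega), Nat.cast_one]
  calc x ≤ ⌈lam * x⌉₊ / lam := by rw [le_div_iff₀ hlam, mul_comm]; exact Nat.le_ceil _
    _ ≤ 2 / lam * (⌈lam * x⌉₊ - 1) := by rw [div_mul_eq_mul_div]; gcongr; linarith
    _ ≤ b * (⌈lam * x⌉₊ - 1) := by gcongr; linarith

instance (n l : ℕ) : Finite (RW n l) :=
  ((List.finite_length_eq (Letter n) l).subset fun _ hw => hw.1).to_subtype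

lemma nonempty_RW {n : ℕ} (hn : 1 ≤ n) (l : ℕ) : Nonempty (RW n l) :=
  ⟨⟨List.replicate l (⟨0, hn⟩, true), List.length_replicate ..,
    List.isChain_replicate_of_rel l (by simp [linv])⟩⟩

lemma card_RW_zero (n : ℕ) : Nat.card (RW n 0) = 1 := by
  have : RW n 0 = {[]} := by
    ext w
    simp only [RW, Set.mem_ofPred_eq, List.length_eq_zero_iff, Set.mem_singleton_iff,
      and_iff_left_iff_imp]
    rintro rfl
    exact List.IsChain.nil
  rw [this, Nat.card_unique]

lemma card_RW_succ_le_mul {n l k : ℕ}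
    (hk : ∀ u ∈ RW n l, Nat.card {a : Letter n // Reduced (a :: u)} ≤ k) :
    Nat.card (RW n (l + 1)) ≤ k * Nat.card (RW n l) := by
  have := Fintype.ofFinite (RW n l)
  let cons : (Σ u : RW n l, {a : Letter n // Reduced (a :: u.1)}) → RW n (l + 1) :=
    fun x => ⟨x.2.1 :: x.1.1, by simp [x.1.2.1], x.2.2⟩
  have hcons : Function.Surjective cons := by
    rintro ⟨_ | ⟨a, u⟩, hlen, hred⟩
    · simp at hlen
    · exact ⟨⟨⟨u, by simpa using hlen, List.IsChain.tail hred⟩, a, hred⟩, rfl⟩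
  calc Nat.card (RW n (l + 1))
      ≤ Nat.card (Σ u : RW n l, {a : Letter n // Reduced (a :: u.1)}) :=
        Nat.card_le_card_of_surjective cons hcons
    _ = ∑ u : RW n l, Nat.card {a : Letter n // Reduced (a :: u.1)} := Nat.card_sigma
    _ ≤ ∑ _u : RW n l, k := Finset.sum_le_sum fun u _ => hk u u.2
    _ = k * Nat.card (RW n l) := by simp [Nat.card_eq_fintype_card, mul_comm]

lemma card_letter (n : ℕ) : Nat.card (Letter n) = 2 * n := by
  simp [mul_comm]

lemma card_reduced_cons_cons_le {n : ℕ} (b : Letter n) (u : List (Letter n)) :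
    Nat.card {a : Letter n // Reduced (a :: b :: u)} ≤ 2 * n - 1 := by
  have hlt : Nat.card {a : Letter n // Reduced (a :: b :: u)} < Nat.card (Letter n) :=
    Finite.card_subtype_lt (x := linv b) fun h => (List.isChain_cons_cons.mp h).1 (by simp [linv])
  rw [card_letter] at hlt
  omega

lemma card_RW_succ_le (n l : ℕ) : Nat.card (RW n (l + 1)) ≤ 2 * n * (2 * n - 1) ^ l := by
  induction l with
  | zero =>
    have h := card_RW_succ_le_mul (n := n) (l := 0) fun u _ =>
      (Finite.card_subtype_le _).trans (card_letter n).le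
    rw [pow_zero, mul_one]
    rwa [card_RW_zero, mul_one] at h
  | succ l ih =>
    have hstep := card_RW_succ_le_mul (n := n) (l := l + 1) (k := 2 * n - 1) fun u hu => by
      obtain ⟨b, v, rfl⟩ := List.exists_cons_of_length_eq_add_one hu.1
      exact card_reduced_cons_cons_le b v
    calc Nat.card (RW n (l + 2)) ≤ (2 * n - 1) * (2 * n * (2 * n - 1) ^ l) :=
          hstep.trans (Nat.mul_le_mul_left _ ih)
      _ = 2 * n * (2 * n - 1) ^ (l + 1) := by ring

lemma card_RW_le {n : ℕ} (hn : 1 ≤ n) (l : ℕ) :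
    (Nat.card (RW n l) : ℝ) ≤ 2 * n / (2 * n - 1) * (2 * n - 1) ^ l := by
  have hn' : (1 : ℝ) ≤ n := by exact_mod_cast hn
  cases l with
  | zero =>
    rw [card_RW_zero, pow_zero, mul_one, Nat.cast_one, le_div_iff₀ (by linarith)]
    linarith
  | succ l =>
    have h := card_RW_succ_le n l
    have hcast : ((2 * n - 1 : ℕ) : ℝ) = 2 * n - 1 := by
      rw [Nat.cast_sub (by omega)]; push_cast; ring
    calc (Nat.card (RW n (l + 1)) : ℝ) ≤ 2 * n * (2 * n - 1) ^ l := by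
          rw [← hcast]; exact_mod_cast h
      _ = 2 * n / (2 * n - 1) * (2 * n - 1) ^ (l + 1) := by
          have : (2 * n - 1 : ℝ) ≠ 0 := by linarith
          field_simp
          ring

noncomputable def langDensity (n : ℕ) (L : Set (List (Letter n))) (l : ℕ) : ℝ :=
  Nat.card ↥(L ∩ RW n l) / Nat.card ↥(RW n l)

lemma langDensity_le_one (n : ℕ) (L : Set (List (Letter n))) (l : ℕ) :
    langDensity n L l ≤ 1 :=
  div_le_one_of_le₀ (by exact_mod_cast Nat.card_mono (Set.toFinite _) Set.inter_subset_right)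
    (Nat.cast_nonneg _)

lemma hitProb_eq {n : ℕ} (hn : 1 ≤ n) (d : ℝ) (L : Set (List (Letter n))) (l : ℕ) :
    hitProb n d L l = 1 - (1 - langDensity n L l) ^ numRelators n d l := by
  have := nonempty_RW hn l
  have hinter : Nat.card {w : RW n l // ↑w ∈ L} = Nat.card ↥(L ∩ RW n l) :=
    Nat.card_congr ((Equiv.subtypeSubtypeEquivSubtypeInter (· ∈ RW n l) (· ∈ L)).trans
      (Equiv.subtypeEquivRight fun _ => and_comm))
  rw [hitProb, card_exists_div_card_pow (fun w : RW n l => ↑w ∈ L), hinter, langDensity]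

lemma numRelators_eq {n : ℕ} (hn : 1 ≤ n) (d : ℝ) (l : ℕ) :
    numRelators n d l = ⌊((2 * (n : ℝ) - 1) ^ d) ^ l⌋₊ := by
  have : (0 : ℝ) ≤ 2 * n - 1 := by
    have : (1 : ℝ) ≤ n := by exact_mod_cast hn
    linarith
  rw [numRelators, Real.rpow_mul this, Real.rpow_natCast]

lemma tendsto_pow_mul_langDensity_atTop {n : ℕ} (hn : 1 ≤ n) {L : Set (List (Letter n))}
    {c b K : ℝ} (hc : 0 < c) (hb : 0 ≤ b) (hbK : 2 * n ≤ b * K)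
    (hgrowth : ∀ᶠ l : ℕ in atTop, c * K ^ l ≤ Nat.card ↥(L ∩ RW n l)) :
    Tendsto (fun l => b ^ l * langDensity n L l) atTop atTop := by
  have hn' : (1 : ℝ) ≤ n := by exact_mod_cast hn
  set q : ℝ := 2 * n / (2 * n - 1)
  have hq : 1 < q := by rw [one_lt_div (by linarith)]; linarith
  have hbound : ∀ᶠ l : ℕ in atTop, c / q * q ^ l ≤ b ^ l * langDensity n L l := by
    filter_upwards [hgrowth] with l hl
    have := nonempty_RW hn l
    have hR : (0 : ℝ) < Nat.card (RW n l) := by exact_mod_cast Nat.card_pos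
    calc c / q * q ^ l = c * (2 * n) ^ l / (q * (2 * n - 1) ^ l) := by
          have : (2 * n - 1 : ℝ) ≠ 0 := by linarith
          rw [div_pow]; field_simp
      _ ≤ c * (b * K) ^ l / Nat.card (RW n l) := by
          gcongr
          exacts [mul_nonneg hc.le (pow_nonneg (by linarith) l), card_RW_le hn l]
      _ = b ^ l * (c * K ^ l) / Nat.card (RW n l) := by ring
      _ ≤ b ^ l * langDensity n L l := by
          rw [mul_div_assoc, langDensity]; gcongr
  exact tendsto_atTop_mono' atTop hbound
    ((tendsto_pow_atTop_atTop_of_one_lt hq).const_mul_atTop (by positivity))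

theorem random_relators_meet_language_ceil_general (n : ℕ) (hn : 2 ≤ n)
    (d : ℝ)
    (lam : ℝ) (hlam : lam ∈ Set.Ioo (0 : ℝ) 1)
    (hpos : 0 < ⌈lam * (2 * (n : ℝ))⌉₊ - 1)
    (hdens : (2 : ℝ) / lam ≤ (2 * (n : ℝ) - 1) ^ (d : ℝ))
    (L : Set (List (Letter n)))
    (c : ℝ) (hc : 0 < c)
    (hgrowth : ∀ᶠ l : ℕ in atTop,
      c * ((⌈lam * (2 * (n : ℝ))⌉₊ - 1 : ℕ) : ℝ) ^ l ≤ (Nat.card ↥(L ∩ RW n l) : ℝ)) :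
    Tendsto (hitProb n d L) atTop (𝓝 1) := by
  have hn1 : 1 ≤ n := by omega
  obtain ⟨hlam0, hlam1⟩ := hlam
  set b := (2 * (n : ℝ) - 1) ^ d
  have hb : 1 < b := lt_of_lt_of_le (by rw [lt_div_iff₀ hlam0]; linarith) hdens
  have hfloor : Tendsto (fun l : ℕ => (numRelators n d l : ℝ) / b ^ l) atTop (𝓝 1) := by
    simp only [numRelators_eq hn1]
    exact tendsto_nat_floor_div_atTop.comp (tendsto_pow_atTop_atTop_of_one_lt hb)
  have hexpected : Tendsto (fun l => b ^ l * langDensity n L l) atTop atTop :=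
    tendsto_pow_mul_langDensity_atTop hn1 hc (by positivity)
      (le_mul_ceil_sub_one hlam0 hdens hpos) hgrowth
  have hNp : Tendsto (fun l => numRelators n d l * langDensity n L l) atTop atTop :=
    (hfloor.pos_mul_atTop one_pos hexpected).congr fun l => by
      field_simp [(pow_pos (zero_lt_one.trans hb) l).ne']
  exact (tendsto_one_sub_one_sub_pow (langDensity_le_one n L) hNp).congr fun l =>
    (hitProb_eq hn1 d L l).symm

/-- Suppose `⌈λ·2n⌉ - 1 > 0` and `(2n-1)^d ≥ 2/λ` for some `λ ∈ (0,1)`. If a language of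
reduced words has growth rate at least `⌈λ·2n⌉ - 1`, then a random set of relators at
density `d` intersects it with probability tending to `1`. -/
theorem random_relators_meet_language_ceil (n : ℕ) (hn : 2 ≤ n)
    (d : ℝ) (hd : d ∈ Set.Ioo (0 : ℝ) 1)
    (lam : ℝ) (hlam : lam ∈ Set.Ioo (0 : ℝ) 1)
    (hpos : 0 < ⌈lam * (2 * (n : ℝ))⌉₊ - 1)
    (hdens : (2 : ℝ) / lam ≤ (2 * (n : ℝ) - 1) ^ (d : ℝ))
    (L : Set (List (Letter n))) (hred : ∀ w ∈ L, Reduced w)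
    (c : ℝ) (hc : 0 < c)
    (hgrowth : ∀ᶠ l : ℕ in atTop,
      c * ((⌈lam * (2 * (n : ℝ))⌉₊ - 1 : ℕ) : ℝ) ^ l ≤ (Nat.card ↥(L ∩ RW n l) : ℝ)) :
    Tendsto (hitProb n d L) atTop (𝓝 1) :=
  random_relators_meet_language_ceil_general n hn d lam hlam hpos hdens L c hc hgrowth
end

section
/- Let S be a set of n ≥ 1 generators, B ≥ 1, and = R_B the alphabet of all reduced words of length B over S (of size 2n̂ = 2n(2n−1)^{B−1}, closed under inversion in F_S). Let λ be a real number with 1/(2n) < λ ≤ 1, and let Σ̂ be an Â-automaton with λ·2n̂-growth. Let 𝓛^red_Σ̂ be the set of words accepted by Σ̂ whose concatenation is a reduced word over S (of length B times the number of Â-letters). Then there exists c > 0 such that for all but finitely many integers L̂ > 0, setting L = B·L̂, the number of reduced words over S of length L arising from 𝓛^red_Σ̂ is at least c·((λ − 1/(2n))^{1/B}·(2n−1))^L. -/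
open Filter Topology

/-- Inversion of words (inversion in the free group `F_S`), the involution on the
alphabet `Â = R_B`. -/
def wInv {n : ℕ} (w : List (Letter n)) : List (Letter n) :=
  (w.map linv).reverse

/-- Running an automaton with partial transition function `δ` from a state, reading a word. -/
def run {A Q : Type} (δ : Q → A → Option Q) : Q → List A → Option Q
  | q, [] => some q
  | q, a :: w => (δ q a).bind fun q' => run δ q' w

/-!
After a prefix ending in the letter `x`, a letter of `Â` defined at the current state extends it
without cancellation unless it begins with `x⁻¹`, and at most `(2n-1)^(B-1)` reduced words of
length `B` do. Since all letters of `Â` have length `B`, distinct choices give distinct words, so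
at least `(λ·2n̂ - (2n-1)^(B-1))^L̂ = ((λ - 1/(2n))·2n·(2n-1)^(B-1))^L̂` reduced words of length
`B·L̂` arise, which is at least `((λ - 1/(2n))·(2n-1)^B)^L̂`: the claim holds with `c = 1`.
-/

instance List.finite_subtype_length_eq_and {α : Type*} [Finite α] {k : ℕ}
    {P : List α → Prop} : Finite {l : List α // l.length = k ∧ P l} :=
  ((List.finite_length_eq α k).subset fun _ hl => hl.1).to_subtype

theorem Nat.card_subtype_eq_card_and_add_card_and_not {α : Type*} {p : α → Prop}
    (r : α → Prop) (hp : {a | p a}.Finite) :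
    Nat.card {a // p a} = Nat.card {a // p a ∧ r a} + Nat.card {a // p a ∧ ¬ r a} :=
  (Set.ncard_inter_add_ncard_sdiff_eq_ncard {a | p a} {a | r a} hp).symm

theorem Nat.card_subtype_mono {α : Type*} {p q : α → Prop} (hq : {a | q a}.Finite)
    (h : ∀ a, p a → q a) : Nat.card {a // p a} ≤ Nat.card {a // q a} :=
  Nat.card_mono hq h

theorem card_isChain_cons_le {α : Type*} [Finite α] (R : α → α → Prop) {d : ℕ}
    (hR : ∀ a, Nat.card {b // R a b} ≤ d) (k : ℕ) (x : α) :
    Nat.card {l : List α // l.length = k ∧ (x :: l).IsChain R} ≤ d ^ k := by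
  induction k generalizing x with
  | zero =>
    refine Finite.card_le_one_iff_subsingleton.mpr ⟨fun l l' => Subtype.ext ?_⟩
    rw [List.length_eq_zero_iff.mp l.2.1, List.length_eq_zero_iff.mp l'.2.1]
  | succ k ih =>
    classical
    have := Fintype.ofFinite α
    let cons : (Σ b : {b // R x b}, {l : List α // l.length = k ∧ (b.1 :: l).IsChain R}) →
        {l : List α // l.length = k + 1 ∧ (x :: l).IsChain R} :=
      fun p => ⟨p.1.1 :: p.2.1, by simp [p.2.2.1], List.isChain_cons_cons.mpr ⟨p.1.2, p.2.2.2⟩⟩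
    have hcons : Function.Surjective cons := by
      rintro ⟨_ | ⟨b, l⟩, hl, hc⟩
      · simp at hl
      · rw [List.isChain_cons_cons] at hc
        exact ⟨⟨⟨b, hc.1⟩, ⟨l, by simpa using hl, hc.2⟩⟩, rfl⟩
    calc _ ≤ Nat.card (Σ b : {b // R x b}, {l : List α // l.length = k ∧ (b.1 :: l).IsChain R}) :=
          Nat.card_le_card_of_surjective cons hcons
      _ = ∑ b : {b // R x b}, Nat.card {l : List α // l.length = k ∧ (b.1 :: l).IsChain R} :=
          Nat.card_sigma
      _ ≤ ∑ _b : {b // R x b}, d ^ k := Finset.sum_le_sum fun b _ => ih b.1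
      _ ≤ d ^ (k + 1) := by
          rw [Finset.sum_const, Finset.card_univ, ← Nat.card_eq_fintype_card, smul_eq_mul,
            pow_succ']
          exact Nat.mul_le_mul_right _ (hR x)

def flatLanguage {α Q : Type} (δ : Q → List α → Option Q) (q : Q) : Set (List α) :=
  {w | ∃ bs : List (List α), (run δ q bs).isSome ∧ bs.flatten = w}

theorem nil_mem_flatLanguage {α Q : Type} (δ : Q → List α → Option Q) (q : Q) :
    [] ∈ flatLanguage δ q :=
  ⟨[], rfl, rfl⟩

theorem append_mem_flatLanguage {α Q : Type} {δ : Q → List α → Option Q} {q q' : Q}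
    {a w : List α} (ha : δ q a = some q') (hw : w ∈ flatLanguage δ q') :
    a ++ w ∈ flatLanguage δ q := by
  obtain ⟨bs, hrun, rfl⟩ := hw
  exact ⟨a :: bs, by simpa [run, ha] using hrun, rfl⟩

theorem List.IsChain.append_of_getLast {α : Type*} {R : α → α → Prop} {l w : List α}
    (hl : l ≠ []) (hchain : l.IsChain R) (hw : (l.getLast hl :: w).IsChain R) :
    (l ++ w).IsChain R := by
  have h := List.isChain_split.mpr ⟨(List.dropLast_append_getLast hl).symm ▸ hchain, hw⟩
  rwa [← List.singleton_append, ← List.append_assoc, List.dropLast_append_getLast hl] at h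

theorem pow_le_card_flatLanguage {α Q : Type} [Finite α] (R : α → α → Prop)
    (δ : Q → List α → Option Q) {B : ℕ} (hlen : ∀ q a, (δ q a).isSome → a.length = B)
    {K : ℝ} (hK : 0 ≤ K)
    (hgrow : ∀ q x, K ≤ Nat.card {a // (δ q a).isSome ∧ (x :: a).IsChain R})
    (m : ℕ) (q : Q) (x : α) :
    K ^ m ≤ Nat.card {w // w.length = B * m ∧ (x :: w).IsChain R ∧ w ∈ flatLanguage δ q} := by
  induction m generalizing q x with
  | zero =>
    have : Nonempty {w // w.length = B * 0 ∧ (x :: w).IsChain R ∧ w ∈ flatLanguage δ q} :=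
      ⟨[], rfl, .singleton x, nil_mem_flatLanguage δ q⟩
    rw [pow_zero, Nat.one_le_cast]
    exact Nat.card_pos
  | succ m ih =>
    classical
    let A := {a // (δ q a).isSome ∧ (x :: a).IsChain R}
    have : Finite A :=
      ((List.finite_length_eq α B).subset fun a ha => hlen q a ha.1).to_subtype
    have := Fintype.ofFinite A
    let T (a : A) := {w // w.length = B * m ∧
      ((x :: a.1).getLast (List.cons_ne_nil x a.1) :: w).IsChain R ∧
      w ∈ flatLanguage δ ((δ q a.1).get a.2.1)}
    let glue : (Σ a : A, T a) →
        {w // w.length = B * (m + 1) ∧ (x :: w).IsChain R ∧ w ∈ flatLanguage δ q} :=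
      fun p => ⟨p.1.1 ++ p.2.1, by
        rw [List.length_append, hlen q _ p.1.2.1, p.2.2.1]; ring,
        p.1.2.2.append_of_getLast (List.cons_ne_nil _ _) p.2.2.2.1,
        append_mem_flatLanguage (Option.some_get p.1.2.1).symm p.2.2.2.2⟩
    have hglue : Function.Injective glue := by
      rintro ⟨a, w⟩ ⟨a', w'⟩ h
      have h' : a.1 ++ w.1 = a'.1 ++ w'.1 := congrArg Subtype.val h
      have hlen' : a.1.length = a'.1.length := by rw [hlen q _ a.2.1, hlen q _ a'.2.1]
      obtain ⟨ha, hw⟩ := List.append_inj h' hlen'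
      obtain rfl : a = a' := Subtype.ext ha
      obtain rfl : w = w' := Subtype.ext hw
      rfl
    calc K ^ (m + 1) = K * K ^ m := pow_succ' K m
      _ ≤ Nat.card A * K ^ m := mul_le_mul_of_nonneg_right (hgrow q x) (pow_nonneg hK m)
      _ = ∑ _a : A, K ^ m := by simp [Nat.card_eq_fintype_card]
      _ ≤ ∑ a : A, (Nat.card (T a) : ℝ) := Finset.sum_le_sum fun a _ => ih _ _
      _ = Nat.card (Σ a : A, T a) := by rw [Nat.card_sigma, Nat.cast_sum]
      _ ≤ _ := Nat.cast_le.mpr (Nat.card_le_card_of_injective glue hglue)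

theorem card_ne_linv (n : ℕ) (a : Letter n) :
    Nat.card {b : Letter n // b ≠ linv a} = 2 * n - 1 := by
  classical
  rw [Nat.card_eq_fintype_card, Fintype.card_subtype_compl, Fintype.card_subtype_eq]
  simp [mul_comm]

theorem eq_linv_cons_tail_of_not_isChain {n : ℕ} {x : Letter n} {a : List (Letter n)}
    (ha : Reduced a) (h : ¬ (x :: a).IsChain fun a b => b ≠ linv a) : a = linv x :: a.tail := by
  cases a with
  | nil => exact absurd (.singleton x) h
  | cons b l =>
    rw [List.isChain_cons_cons, not_and'] at h
    rw [not_not.mp (h ha)]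
    rfl

theorem card_reduced_not_isChain_cons_le (n B : ℕ) (x : Letter n) :
    Nat.card {a // a ∈ RW n B ∧ ¬ (x :: a).IsChain fun a b => b ≠ linv a} ≤
      (2 * n - 1) ^ (B - 1) := by
  let tail : {a // a ∈ RW n B ∧ ¬ (x :: a).IsChain fun a b => b ≠ linv a} →
      {l : List (Letter n) // l.length = B - 1 ∧ (linv x :: l).IsChain fun a b => b ≠ linv a} :=
    fun a => ⟨a.1.tail, by simp [a.2.1.1], by
      rw [← eq_linv_cons_tail_of_not_isChain a.2.1.2 a.2.2]; exact a.2.1.2⟩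
  have htail : Function.Injective tail := by
    rintro ⟨a, ha⟩ ⟨a', ha'⟩ h
    have h' : a.tail = a'.tail := congrArg Subtype.val h
    refine Subtype.ext ?_
    calc a = linv x :: a.tail := eq_linv_cons_tail_of_not_isChain ha.1.2 ha.2
      _ = linv x :: a'.tail := by rw [h']
      _ = a' := (eq_linv_cons_tail_of_not_isChain ha'.1.2 ha'.2).symm
  exact (Nat.card_le_card_of_injective tail htail).trans
    (card_isChain_cons_le _ (fun a => (card_ne_linv n a).le) _ _)

theorem card_isSome_le_card_isChain_cons_add {n B : ℕ} {Q : Type}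
    {δ : Q → List (Letter n) → Option Q} (hdom : ∀ q a, (δ q a).isSome → a ∈ RW n B)
    (q : Q) (x : Letter n) :
    Nat.card {a // (δ q a).isSome} ≤
      Nat.card {a // (δ q a).isSome ∧ (x :: a).IsChain fun a b => b ≠ linv a} +
        (2 * n - 1) ^ (B - 1) := by
  have hfin : {a | (δ q a).isSome}.Finite :=
    (List.finite_length_eq _ B).subset fun a ha => (hdom q a ha).1
  rw [Nat.card_subtype_eq_card_and_add_card_and_not _ hfin]
  refine Nat.add_le_add_left ((Nat.card_subtype_mono ?_ fun a ha => ⟨hdom q a ha.1, ha.2⟩).trans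
    (card_reduced_not_isChain_cons_le n B x)) _
  exact (List.finite_length_eq _ B).subset fun a ha => ha.1.1

theorem rpow_one_div_mul_pow_mul {μ : ℝ} (hμ : 0 ≤ μ) (t : ℝ) {B : ℕ} (hB : B ≠ 0) (L : ℕ) :
    (μ ^ ((1 : ℝ) / B) * t) ^ (B * L) = (μ * t ^ B) ^ L := by
  rw [pow_mul, mul_pow, ← Real.rpow_natCast (μ ^ _) B, ← Real.rpow_mul hμ,
    one_div_mul_cancel (Nat.cast_ne_zero.mpr hB), Real.rpow_one]

theorem mul_pow_le_mul_card_sub {n B : ℕ} (hn : 1 ≤ n) (hB : 1 ≤ B) {lam : ℝ}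
    (hlam : 1 / (2 * (n : ℝ)) ≤ lam) :
    (lam - 1 / (2 * (n : ℝ))) * (2 * (n : ℝ) - 1) ^ B ≤
      lam * ((2 * n * (2 * n - 1) ^ (B - 1) : ℕ) : ℝ) - ((2 * n - 1) ^ (B - 1) : ℕ) := by
  have hn' : (1 : ℝ) ≤ n := Nat.one_le_cast.mpr hn
  have hμ : 0 ≤ lam - 1 / (2 * (n : ℝ)) := sub_nonneg.mpr hlam
  have hcast : ((2 * n - 1 : ℕ) : ℝ) = 2 * (n : ℝ) - 1 := by
    rw [Nat.cast_sub (by omega)]; push_cast; rfl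
  have hrhs : lam * ((2 * n * (2 * n - 1) ^ (B - 1) : ℕ) : ℝ) - ((2 * n - 1) ^ (B - 1) : ℕ) =
      (lam - 1 / (2 * (n : ℝ))) * (2 * n) * (2 * (n : ℝ) - 1) ^ (B - 1) := by
    push_cast [hcast]; field_simp
  rw [hrhs, ← Nat.sub_add_cancel hB, pow_succ', Nat.add_sub_cancel, ← mul_assoc]
  have ht : (0 : ℝ) ≤ 2 * n - 1 := by linarith
  gcongr
  linarith

theorem reduced_language_growth_general (n B : ℕ) (hn : 1 ≤ n) (hB : 1 ≤ B)
    (Q : Type) (v0 : Q)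
    (δ : Q → List (Letter n) → Option Q)
    (hdom : ∀ q a, (δ q a).isSome → a ∈ RW n B)
    (lam : ℝ) (hlam1 : 1 / (2 * (n : ℝ)) < lam)
    (hgrow : ∀ q : Q,
      lam * ((2 * n * (2 * n - 1) ^ (B - 1) : ℕ) : ℝ) ≤
        (Nat.card {a : List (Letter n) // (δ q a).isSome} : ℝ)) :
    ∃ c : ℝ, 0 < c ∧ ∀ᶠ Lhat : ℕ in atTop,
      c * ((lam - 1 / (2 * (n : ℝ))) ^ ((1 : ℝ) / (B : ℝ)) * (2 * (n : ℝ) - 1)) ^ (B * Lhat) ≤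
        (Nat.card {w : List (Letter n) //
          w.length = B * Lhat ∧ Reduced w ∧
          ∃ q : List (List (Letter n)), (run δ v0 q).isSome ∧ q.flatten = w} : ℝ) := by
  set μ := lam - 1 / (2 * (n : ℝ))
  set K : ℝ := lam * ((2 * n * (2 * n - 1) ^ (B - 1) : ℕ) : ℝ) - ((2 * n - 1) ^ (B - 1) : ℕ)
  have hμ : 0 < μ := sub_pos.mpr hlam1
  have ht : (0 : ℝ) ≤ 2 * n - 1 := by linarith [(Nat.one_le_cast (α := ℝ)).mpr hn]
  have hK : μ * (2 * n - 1) ^ B ≤ K := mul_pow_le_mul_card_sub hn hB hlam1.le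
  have hgrow' (q : Q) (x : Letter n) :
      K ≤ Nat.card {a // (δ q a).isSome ∧ (x :: a).IsChain fun a b => b ≠ linv a} := by
    have hcard := Nat.cast_le (α := ℝ).mpr (card_isSome_le_card_isChain_cons_add hdom q x)
    rw [Nat.cast_add] at hcard
    linarith [hgrow q]
  let x : Letter n := (⟨0, hn⟩, true)
  refine ⟨1, one_pos, .of_forall fun L => ?_⟩
  calc 1 * (μ ^ ((1 : ℝ) / B) * (2 * n - 1)) ^ (B * L) = (μ * (2 * n - 1) ^ B) ^ L := by
        rw [one_mul, rpow_one_div_mul_pow_mul hμ.le _ (by omega)]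
    _ ≤ K ^ L := pow_le_pow_left₀ (by positivity) hK L
    _ ≤ Nat.card {w // w.length = B * L ∧ (x :: w).IsChain (fun a b => b ≠ linv a) ∧
          w ∈ flatLanguage δ v0} :=
        pow_le_card_flatLanguage _ δ (fun q a ha => (hdom q a ha).1)
          ((mul_nonneg hμ.le (pow_nonneg ht B)).trans hK) hgrow' L v0 x
    _ ≤ _ := Nat.cast_le.mpr <|
        Nat.card_subtype_mono ((List.finite_length_eq _ _).subset fun w hw => hw.1)
          fun w hw => ⟨hw.1, hw.2.1.tail, hw.2.2⟩

/-- Let `Σ̂` be an automaton over the alphabet `Â = R_B` (with the immersion condition)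
with `λ·2n̂`-growth, where `2n̂ = 2n(2n-1)^(B-1)` and `1/(2n) < λ ≤ 1`. Then the words
accepted by `Σ̂` whose concatenation is reduced over `S` yield, for all but finitely
many `L̂` and `L = B·L̂`, at least `c·((λ - 1/(2n))^(1/B)·(2n-1))^L` reduced words of
length `L` over `S`, for some `c > 0`. -/
theorem reduced_language_growth (n B : ℕ) (hn : 1 ≤ n) (hB : 1 ≤ B)
    (Q : Type) [Finite Q] (v0 : Q)
    (δ : Q → List (Letter n) → Option Q)
    (hdom : ∀ q a, (δ q a).isSome → a ∈ RW n B)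
    (himm : ∀ u a v, δ u a = some v → δ v (wInv a) = none)
    (lam : ℝ) (hlam1 : 1 / (2 * (n : ℝ)) < lam) (hlam2 : lam ≤ 1)
    (hgrow : ∀ q : Q,
      lam * ((2 * n * (2 * n - 1) ^ (B - 1) : ℕ) : ℝ) ≤
        (Nat.card {a : List (Letter n) // (δ q a).isSome} : ℝ)) :
    ∃ c : ℝ, 0 < c ∧ ∀ᶠ Lhat : ℕ in atTop,
      c * ((lam - 1 / (2 * (n : ℝ))) ^ ((1 : ℝ) / (B : ℝ)) * (2 * (n : ℝ) - 1)) ^ (B * Lhat) ≤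
        (Nat.card {w : List (Letter n) //
          w.length = B * Lhat ∧ Reduced w ∧
          ∃ q : List (List (Letter n)), (run δ v0 q).isSome ∧ q.flatten = w} : ℝ) :=
  reduced_language_growth_general n B hn hB Q v0 δ hdom lam hlam1 hgrow
end

section
/- Let S be a set of n ≥ 2 generators, d ∈ (0,1), B ≥ 1, and 0 ≤ P < B. Let 𝓛 be a language of reduced words over S and k > (2n−1)^{1−d} a real number such that, for some c > 0, |𝓛 ∩ R_L| ≥ c·k^L for all but finitely many L with L ≡ P (mod B). Then the probability that a random set of relators at density d and length L contains at least one element of 𝓛 tends to 1 as L → ∞ along integers L with L ≡ P (mod B). -/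
open Filter Topology

/-!
A single uniform relator of length `l` lies in `𝓛` with probability
`q = |𝓛 ∩ R_l| / |R_l| ≥ c k^l / (2 (2n-1)^l)`, because `|R_l| ≤ 2 (2n-1)^l`. All
`N = ⌊(2n-1)^(dl)⌋ ≥ (2n-1)^(dl) / 2` independent relators miss `𝓛` with probability
`(1 - q)^N ≤ exp (-N q)`, and `N q ≥ (c/4) (k (2n-1)^(d-1))^l → ∞` since `k > (2n-1)^(1-d)`.
-/

lemma RW.finite (n l : ℕ) : (RW n l).Finite :=
  (List.finite_length_eq (Letter n) l).subset fun _ hw => hw.1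

instance (n l : ℕ) : Finite ↥(RW n l) := (RW.finite n l).to_subtype

lemma RW.zero_eq (n : ℕ) : RW n 0 = {[]} := by
  ext w
  constructor
  · rintro ⟨hw, -⟩
    exact List.length_eq_zero_iff.1 hw
  · rintro rfl
    exact ⟨rfl, List.isChain_nil⟩

lemma reduced_cons_iff {n : ℕ} {a : Letter n} {w : List (Letter n)} :
    Reduced (a :: w) ↔ (∀ b ∈ w.head?, b ≠ linv a) ∧ Reduced w :=
  List.isChain_cons

lemma card_letter_ne {n : ℕ} (x : Letter n) : Nat.card {a : Letter n // a ≠ x} = 2 * n - 1 := by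
  simp only [ne_eq, Nat.card_eq_fintype_card, Fintype.card_subtype_compl, Fintype.card_prod,
    Fintype.card_fin, Fintype.card_bool, Fintype.card_unique]
  omega

lemma card_reduced_cons_le {n : ℕ} {w : List (Letter n)} (hw : w ≠ []) :
    Nat.card {a : Letter n // Reduced (a :: w)} ≤ 2 * n - 1 := by
  obtain ⟨b, t, rfl⟩ := List.exists_cons_of_ne_nil hw
  rw [← card_letter_ne (linv b)]
  refine Nat.card_le_card_of_injective (fun a => ⟨a.1, ?_⟩) fun a a' h => ?_
  · intro hab
    exact (reduced_cons_iff.1 a.2).1 b rfl (by simp [hab, linv])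
  · exact Subtype.ext (congrArg Subtype.val h :)

lemma RW.card_succ_le_mul {n l m : ℕ}
    (hm : ∀ w ∈ RW n l, Nat.card {a : Letter n // Reduced (a :: w)} ≤ m) :
    Nat.card (RW n (l + 1)) ≤ m * Nat.card (RW n l) := by
  have := Fintype.ofFinite (RW n l)
  let cons : (Σ w : RW n l, {a : Letter n // Reduced (a :: w.1)}) → RW n (l + 1) :=
    fun p => ⟨p.2.1 :: p.1.1, by simp [p.1.2.1], p.2.2⟩
  have cons_surjective : Function.Surjective cons := by
    rintro ⟨_ | ⟨a, w⟩, hlen, hred⟩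
    · simp at hlen
    · exact ⟨⟨⟨w, by simpa using hlen, (reduced_cons_iff.1 hred).2⟩, ⟨a, hred⟩⟩, rfl⟩
  calc Nat.card (RW n (l + 1))
      ≤ Nat.card (Σ w : RW n l, {a : Letter n // Reduced (a :: w.1)}) :=
        Nat.card_le_card_of_surjective cons cons_surjective
    _ = ∑ w : RW n l, Nat.card {a : Letter n // Reduced (a :: w.1)} := Nat.card_sigma
    _ ≤ ∑ _w : RW n l, m := Finset.sum_le_sum fun w _ => hm w w.2
    _ = m * Nat.card (RW n l) := by simp [Nat.card_eq_fintype_card, mul_comm]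

lemma RW.card_le (n l : ℕ) : Nat.card (RW n l) ≤ 2 * (2 * n - 1) ^ l := by
  induction l with
  | zero => simp [RW.zero_eq]
  | succ l ih =>
    cases l with
    | zero =>
      have h1 : Nat.card (RW n 1) ≤ 2 * n * Nat.card (RW n 0) := RW.card_succ_le_mul fun _ _ =>
        (Finite.card_subtype_le _).trans (by simp [Nat.card_eq_fintype_card, mul_comm])
      simp only [RW.zero_eq, Nat.card_unique, mul_one] at h1
      rw [zero_add, pow_one]
      omega
    | succ l =>
      calc Nat.card (RW n (l + 2)) ≤ (2 * n - 1) * Nat.card (RW n (l + 1)) :=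
            RW.card_succ_le_mul fun w hw =>
              card_reduced_cons_le (List.ne_nil_of_length_pos (by simp [hw.1]))
        _ ≤ (2 * n - 1) * (2 * (2 * n - 1) ^ (l + 1)) := Nat.mul_le_mul_left _ ih
        _ = 2 * (2 * n - 1) ^ (l + 2) := by ring

lemma RW.card_pos {n : ℕ} (hn : 1 ≤ n) (l : ℕ) : 0 < Nat.card (RW n l) := by
  have : Nonempty (RW n l) := ⟨List.replicate l (⟨0, hn⟩, true), List.length_replicate,
    List.isChain_replicate_of_rel l (by simp [linv])⟩
  exact Nat.card_pos

lemma Nat.card_exists_apply_add_card_pow (ι : Type*) {α : Type*} [Finite ι] [Finite α]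
    (p : α → Prop) :
    Nat.card {f : ι → α // ∃ i, p (f i)} + Nat.card {a // ¬p a} ^ Nat.card ι =
      Nat.card α ^ Nat.card ι := by
  classical
  have avoid : {f : ι → α // ¬∃ i, p (f i)} ≃ (ι → {a // ¬p a}) :=
    (Equiv.subtypeEquivRight fun f : ι → α => not_exists).trans
      (Equiv.subtypePiEquivPi (p := fun _ a => ¬p a))
  rw [← Nat.card_fun, ← Nat.card_congr avoid, ← Nat.card_sum,
    Nat.card_congr (Equiv.sumCompl _), Nat.card_fun]

lemma card_exists_apply_div_card_pow (ι : Type*) {α : Type*} [Finite ι] [Finite α] [Nonempty α]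
    (p : α → Prop) :
    (Nat.card {f : ι → α // ∃ i, p (f i)} : ℝ) / Nat.card α ^ Nat.card ι =
      1 - (1 - Nat.card {a // p a} / Nat.card α) ^ Nat.card ι := by
  classical
  have hα : (Nat.card α : ℝ) ≠ 0 := Nat.cast_ne_zero.2 Nat.card_pos.ne'
  have hsplit : (Nat.card {a // p a} : ℝ) + Nat.card {a // ¬p a} = Nat.card α := by
    exact_mod_cast (Nat.card_sum).symm.trans (Nat.card_congr (Equiv.sumCompl p))
  have hcount := congrArg (Nat.cast : ℕ → ℝ) (Nat.card_exists_apply_add_card_pow ι p)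
  push_cast at hcount
  have hmiss :
      1 - (Nat.card {a // p a} : ℝ) / Nat.card α = Nat.card {a // ¬p a} / Nat.card α := by
    field_simp
    linarith
  rw [hmiss, div_pow, eq_sub_iff_add_eq, ← add_div, hcount, div_self (pow_ne_zero _ hα)]

noncomputable def proportion (n : ℕ) (L : Set (List (Letter n))) (l : ℕ) : ℝ :=
  (Nat.card ↥(L ∩ RW n l) : ℝ) / Nat.card (RW n l)

lemma proportion_le_one (n : ℕ) (L : Set (List (Letter n))) (l : ℕ) : proportion n L l ≤ 1 :=
  div_le_one_of_le₀ (by exact_mod_cast Nat.card_mono (RW.finite n l) Set.inter_subset_right)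
    (Nat.cast_nonneg _)

lemma hitProb_eq_one_sub {n : ℕ} (hn : 1 ≤ n) (d : ℝ) (L : Set (List (Letter n))) (l : ℕ) :
    hitProb n d L l = 1 - (1 - proportion n L l) ^ numRelators n d l := by
  have : Nonempty (RW n l) := Nat.card_pos_iff.1 (RW.card_pos hn l) |>.1
  have hL : Nat.card {w : RW n l // w.1 ∈ L} = Nat.card ↥(L ∩ RW n l) :=
    Nat.card_congr ((Equiv.subtypeSubtypeEquivSubtypeInter _ _).trans
      (Equiv.setCongr (Set.inter_comm _ _)))
  rw [hitProb, proportion, ← hL]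
  simpa only [Nat.card_fin] using
    card_exists_apply_div_card_pow (Fin (numRelators n d l)) fun w : RW n l => w.1 ∈ L

lemma tendsto_one_sub_pow_atTop_zero {ι : Type*} {F : Filter ι} {q : ι → ℝ} {N : ι → ℕ}
    (hq : ∀ i, q i ≤ 1) (hNq : Tendsto (fun i => N i * q i) F atTop) :
    Tendsto (fun i => (1 - q i) ^ N i) F (𝓝 0) := by
  refine squeeze_zero (fun i => pow_nonneg (sub_nonneg.2 (hq i)) _) (fun i => ?_)
    (Real.tendsto_exp_neg_atTop_nhds_zero.comp hNq)
  calc (1 - q i) ^ N i ≤ Real.exp (-q i) ^ N i :=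
        pow_le_pow_left₀ (sub_nonneg.2 (hq i)) (Real.one_sub_le_exp_neg _) _
    _ = Real.exp (-(N i * q i)) := by rw [← Real.exp_nat_mul]; ring_nf

lemma tendsto_hitProb_one {n : ℕ} (hn : 1 ≤ n) (d : ℝ) (L : Set (List (Letter n)))
    {ι : Type*} {F : Filter ι} (l : ι → ℕ)
    (h : Tendsto (fun i => numRelators n d (l i) * proportion n L (l i)) F atTop) :
    Tendsto (fun i => hitProb n d L (l i)) F (𝓝 1) := by
  simp only [hitProb_eq_one_sub hn]
  simpa using (tendsto_one_sub_pow_atTop_zero (fun i => proportion_le_one n L (l i)) h).const_sub 1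

lemma rpow_div_two_le_numRelators {n : ℕ} (hn : 1 ≤ n) {d : ℝ} (hd : 0 ≤ d) (l : ℕ) :
    (2 * (n : ℝ) - 1) ^ (d * l) / 2 ≤ numRelators n d l := by
  have hn' : (1 : ℝ) ≤ n := by exact_mod_cast hn
  exact (Nat.div_two_lt_floor (Real.one_le_rpow (by linarith) (by positivity))).le

lemma mul_pow_le_numRelators_mul_proportion {n : ℕ} (hn : 1 ≤ n) {d : ℝ} (hd : 0 ≤ d)
    {L : Set (List (Letter n))} {c k : ℝ} (hc : 0 ≤ c) (hk : 0 ≤ k) {l : ℕ}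
    (hL : c * k ^ l ≤ Nat.card ↥(L ∩ RW n l)) :
    c / 4 * (k * (2 * (n : ℝ) - 1) ^ (d - 1)) ^ l ≤ numRelators n d l * proportion n L l := by
  set t : ℝ := 2 * n - 1 with ht
  have ht0 : 0 < t := by
    have : (1 : ℝ) ≤ n := by exact_mod_cast hn
    linarith
  have hRW : (Nat.card (RW n l) : ℝ) ≤ 2 * t ^ l := by
    have := RW.card_le n l
    rw [ht, ← Nat.cast_ofNat, ← Nat.cast_mul, ← Nat.cast_one, ← Nat.cast_sub (by omega)]
    exact_mod_cast this
  have hprop : c * k ^ l / (2 * t ^ l) ≤ proportion n L l :=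
    div_le_div₀ (Nat.cast_nonneg _) hL (by exact_mod_cast RW.card_pos hn l) hRW
  calc c / 4 * (k * t ^ (d - 1)) ^ l = t ^ (d * l) / 2 * (c * k ^ l / (2 * t ^ l)) := by
        rw [mul_pow, ← Real.rpow_mul_natCast ht0.le, sub_mul, one_mul, Real.rpow_sub ht0,
          Real.rpow_natCast]
        field_simp
        ring
    _ ≤ numRelators n d l * proportion n L l :=
        mul_le_mul (rpow_div_two_le_numRelators hn hd l) hprop (by positivity) (Nat.cast_nonneg _)

theorem random_relators_meet_language_mod_general (n : ℕ) (hn : 2 ≤ n)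
    (d : ℝ) (hd : d ∈ Set.Ioo (0 : ℝ) 1)
    (B P : ℕ) (hB : 1 ≤ B)
    (L : Set (List (Letter n)))
    (k : ℝ) (hk : (2 * (n : ℝ) - 1) ^ ((1 : ℝ) - d) < k)
    (c : ℝ) (hc : 0 < c)
    (hgrowth : ∀ᶠ Lhat : ℕ in atTop,
      c * k ^ (B * Lhat + P) ≤ (Nat.card ↥(L ∩ RW n (B * Lhat + P)) : ℝ)) :
    Tendsto (fun Lhat : ℕ => hitProb n d L (B * Lhat + P)) atTop (𝓝 1) := by
  have ht : (0 : ℝ) < 2 * n - 1 := by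
    have : (2 : ℝ) ≤ n := by exact_mod_cast hn
    linarith
  have hk0 : 0 < k := (Real.rpow_pos_of_pos ht _).trans hk
  have hρ : 1 < k * (2 * (n : ℝ) - 1) ^ (d - 1) :=
    calc 1 = (2 * (n : ℝ) - 1) ^ (1 - d) * (2 * (n : ℝ) - 1) ^ (d - 1) := by
          rw [← Real.rpow_add ht]; simp
      _ < k * (2 * (n : ℝ) - 1) ^ (d - 1) := mul_lt_mul_of_pos_right hk (by positivity)
  have hlen : Tendsto (fun Lhat : ℕ => B * Lhat + P) atTop atTop :=
    tendsto_atTop_mono (fun m => le_add_right (Nat.le_mul_of_pos_left m hB)) tendsto_id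
  have hbound : Tendsto
      (fun Lhat : ℕ => c / 4 * (k * (2 * (n : ℝ) - 1) ^ (d - 1)) ^ (B * Lhat + P)) atTop atTop :=
    ((tendsto_pow_atTop_atTop_of_one_lt hρ).comp hlen).const_mul_atTop (by positivity)
  refine tendsto_hitProb_one (by omega) d L _ (tendsto_atTop_mono' _ ?_ hbound)
  exact hgrowth.mono fun Lhat h =>
    mul_pow_le_numRelators_mul_proportion (by omega) hd.1.le hc.le hk0.le h

/-- If a language `𝓛` of reduced words over `n ≥ 2` generators has `I_P`-growth rate at
least `k > (2n-1)^(1-d)` (i.e. `|𝓛 ∩ R_L| ≥ c·k^L` for all but finitely many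
`L ≡ P (mod B)`), then a random set of relators at density `d` and length `L` meets `𝓛`
with probability tending to `1` as `L → ∞` along `L ≡ P (mod B)`. -/
theorem random_relators_meet_language_mod (n : ℕ) (hn : 2 ≤ n)
    (d : ℝ) (hd : d ∈ Set.Ioo (0 : ℝ) 1)
    (B P : ℕ) (hB : 1 ≤ B) (hP : P < B)
    (L : Set (List (Letter n))) (hred : ∀ w ∈ L, Reduced w)
    (k : ℝ) (hk : (2 * (n : ℝ) - 1) ^ ((1 : ℝ) - d) < k)
    (c : ℝ) (hc : 0 < c)
    (hgrowth : ∀ᶠ Lhat : ℕ in atTop,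
      c * k ^ (B * Lhat + P) ≤ (Nat.card ↥(L ∩ RW n (B * Lhat + P)) : ℝ)) :
    Tendsto (fun Lhat : ℕ => hitProb n d L (B * Lhat + P)) atTop (𝓝 1) :=
  random_relators_meet_language_mod_general n hn d hd B P hB L k hk c hc hgrowth
end
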